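/- arXiv:2405.13766 — 2 statements merged into one kernel-verified Lean document; each statement's English description precedes it below -/
import Mathlib

section
/- Under the assumptions that each fᵢ is differentiable, convex, Lᵢ-smooth, the interpolation regime holds, and additionally f = (1/n)∑ᵢ fᵢ is μ-strongly convex, the averaged Moreau envelope M^γ = (1/n)∑ᵢ M_{fᵢ}^γ satisfies M^γ(x) − M^γ(x⋆) ≥ (μ/(1+γL_max)) · (1/2)‖x − x⋆‖² for any x ∈ ℝ^d and any minimizer x⋆ of M^γ. -/
/-!
Let `x⋆` be a common stationary point of the `fᵢ` (interpolation). By convexity it minimizes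
every `fᵢ`, and `L`-smoothness then gives `‖∇fᵢ z‖² ≤ 2L (fᵢ z - fᵢ x⋆)`. Combined with the
descent lemma and Young's inequality this yields, for every `z`,
`fᵢ x - fᵢ x⋆ ≤ (1 + γL) (fᵢ z + ‖z - x‖² / (2γ) - fᵢ x⋆)`, i.e.
`M_{fᵢ}^γ x - fᵢ x⋆ ≥ (fᵢ x - fᵢ x⋆) / (1 + γL)`. Averaging, `M^γ - f(x⋆)` dominates
`(f - f(x⋆)) / (1 + γ L_max)`, and `M^γ(x⋆) = f(x⋆)`; strong convexity of `f` at its minimizer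
`x⋆` then shows that `x⋆` is the only minimizer of `M^γ` and gives the quadratic growth.
-/

/-- The Moreau envelope of a real-valued function `f` with parameter `γ`. -/
noncomputable def moreau {d : ℕ} (γ : ℝ) (f : EuclideanSpace ℝ (Fin d) → ℝ)
    (x : EuclideanSpace ℝ (Fin d)) : ℝ :=
  ⨅ z, (f z + (1 / (2 * γ)) * ‖z - x‖ ^ 2)

open Set AffineMap
open scoped RealInnerProductSpace

section InnerProductSpace

variable {E : Type*} [NormedAddCommGroup E] [InnerProductSpace ℝ E] [CompleteSpace E]
  {f : E → ℝ}

theorem HasGradientAt.hasDerivAt_comp_lineMap {G x y : E} {t : ℝ}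
    (h : HasGradientAt f G (lineMap x y t)) :
    HasDerivAt (fun s : ℝ => f (lineMap x y s)) ⟪G, y - x⟫ t := by
  have hl : HasDerivAt (fun s : ℝ => lineMap x y s) (y - x) t := hasDerivAt_lineMap
  have := h.hasFDerivAt.comp_hasDerivAt t hl
  rw [InnerProductSpace.toDual_apply_apply] at this
  exact this

theorem ConvexOn.add_inner_le_of_hasGradientAt (hf : ConvexOn ℝ univ f) {G x : E}
    (h : HasGradientAt f G x) (y : E) : f x + ⟪G, y - x⟫ ≤ f y := by
  have hline : ConvexOn ℝ univ (fun s : ℝ => f (lineMap x y s)) :=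
    hf.comp_affineMap (lineMap x y)
  have hd := (lineMap_apply_zero x y (k := ℝ) ▸ h).hasDerivAt_comp_lineMap
  have := hline.le_slope_of_hasDerivAt (mem_univ 0) (mem_univ 1) one_pos hd
  simp only [slope_def_field, lineMap_apply_one, lineMap_apply_zero, sub_zero, div_one] at this
  linarith

theorem ConvexOn.isMinOn_of_hasGradientAt_zero (hf : ConvexOn ℝ univ f) {x : E}
    (h : HasGradientAt f 0 x) : IsMinOn f univ x :=
  isMinOn_univ_iff.mpr fun y => by simpa using hf.add_inner_le_of_hasGradientAt h y

variable {g : E → E} {L : ℝ}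

theorem le_add_inner_add_half_mul_norm_sq (hg : ∀ z, HasGradientAt f (g z) z)
    (hlip : ∀ z w, ‖g z - g w‖ ≤ L * ‖z - w‖) (x y : E) :
    f y ≤ f x + ⟪g x, y - x⟫ + L / 2 * ‖y - x‖ ^ 2 := by
  set v := y - x
  set ψ : ℝ → ℝ := fun s => f (lineMap x y s) - s * ⟪g x, v⟫ - L / 2 * ‖v‖ ^ 2 * s ^ 2
  have hψ s : HasDerivAt ψ (⟪g (lineMap x y s) - g x, v⟫ - L * ‖v‖ ^ 2 * s) s := by
    refine (((hg _).hasDerivAt_comp_lineMap.sub ((hasDerivAt_id s).mul_const _)).sub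
      ((hasDerivAt_pow 2 s).const_mul (L / 2 * ‖v‖ ^ 2))).congr_deriv ?_
    rw [inner_sub_left]
    push_cast
    ring
  have hψ'_nonpos s (hs : 0 ≤ s) : ⟪g (lineMap x y s) - g x, v⟫ - L * ‖v‖ ^ 2 * s ≤ 0 := by
    have hdist : ‖lineMap x y s - x‖ = s * ‖v‖ := by
      rw [← vsub_eq_sub, lineMap_vsub_left, vsub_eq_sub, norm_smul, Real.norm_of_nonneg hs]
    rw [sub_nonpos]
    calc ⟪g (lineMap x y s) - g x, v⟫ ≤ ‖g (lineMap x y s) - g x‖ * ‖v‖ := real_inner_le_norm _ _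
      _ ≤ L * ‖lineMap x y s - x‖ * ‖v‖ := by gcongr; exact hlip _ _
      _ = L * ‖v‖ ^ 2 * s := by rw [hdist]; ring
  have hanti : AntitoneOn ψ (Icc 0 1) :=
    antitoneOn_of_hasDerivWithinAt_nonpos (convex_Icc 0 1)
      (HasDerivAt.continuousOn fun s _ => hψ s) (fun s _ => (hψ s).hasDerivWithinAt)
      fun s hs => hψ'_nonpos s (by rw [interior_Icc] at hs; exact hs.1.le)
  have := hanti (left_mem_Icc.mpr zero_le_one) (right_mem_Icc.mpr zero_le_one) zero_le_one
  simp only [ψ, lineMap_apply_zero, lineMap_apply_one] at this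
  linarith

theorem sq_norm_le_two_mul_sub_of_isMinOn (hL : 0 < L) (hg : ∀ z, HasGradientAt f (g z) z)
    (hlip : ∀ z w, ‖g z - g w‖ ≤ L * ‖z - w‖) {xs : E} (hmin : IsMinOn f univ xs) (z : E) :
    ‖g z‖ ^ 2 ≤ 2 * L * (f z - f xs) := by
  have hstep := le_add_inner_add_half_mul_norm_sq hg hlip z (z - L⁻¹ • g z)
  rw [sub_sub_cancel_left, inner_neg_right, real_inner_smul_right, real_inner_self_eq_norm_sq,
    norm_neg, norm_smul, Real.norm_of_nonneg (inv_nonneg.mpr hL.le)] at hstep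
  have hle := isMinOn_univ_iff.mp hmin (z - L⁻¹ • g z)
  have hdecrease : L⁻¹ * ‖g z‖ ^ 2 - L / 2 * (L⁻¹ * ‖g z‖) ^ 2 = ‖g z‖ ^ 2 / (2 * L) := by
    field_simp
    ring
  rw [← div_le_iff₀' (by positivity)]
  linarith

theorem sub_le_one_add_mul_objective_sub {γ : ℝ} (hγ : 0 < γ) (hL : 0 < L)
    (hg : ∀ z, HasGradientAt f (g z) z) (hlip : ∀ z w, ‖g z - g w‖ ≤ L * ‖z - w‖) {xs : E}
    (hmin : IsMinOn f univ xs) (x z : E) :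
    f x - f xs ≤ (1 + γ * L) * (f z + 1 / (2 * γ) * ‖z - x‖ ^ 2 - f xs) := by
  have hdescent := le_add_inner_add_half_mul_norm_sq hg hlip z x
  have hgrad := sq_norm_le_two_mul_sub_of_isMinOn hL hg hlip hmin z
  have hyoung : 2 * γ * ⟪g z, x - z⟫ ≤ γ ^ 2 * ‖g z‖ ^ 2 + ‖x - z‖ ^ 2 := by
    nlinarith [real_inner_le_norm (g z) (x - z), two_mul_le_add_sq (γ * ‖g z‖) ‖x - z‖]
  have hscaled : 2 * γ * (f x - f xs) ≤ (1 + γ * L) * (2 * γ * (f z - f xs) + ‖x - z‖ ^ 2) := by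
    linarith [mul_le_mul_of_nonneg_left hdescent (by positivity : 0 ≤ 2 * γ),
      mul_le_mul_of_nonneg_left hgrad (sq_nonneg γ)]
  have hrhs : (1 + γ * L) * (f z + 1 / (2 * γ) * ‖z - x‖ ^ 2 - f xs) =
      (1 + γ * L) * (2 * γ * (f z - f xs) + ‖x - z‖ ^ 2) / (2 * γ) := by
    rw [norm_sub_rev]
    field_simp
    ring
  rw [hrhs, le_div_iff₀ (by positivity)]
  linarith

end InnerProductSpace

theorem quadratic_growth_of_forall_add_div_le {E : Type*} [NormedAddCommGroup E]
    {M F : E → ℝ} {xs xstar : E} {K μ : ℝ} (hK : 0 < K) (hμ : 0 < μ)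
    (hF : ∀ y, μ / 2 * ‖y - xs‖ ^ 2 ≤ F y - F xs) (hMF : ∀ y, F xs + (F y - F xs) / K ≤ M y)
    (hMxs : M xs ≤ F xs) (hstar : ∀ y, M xstar ≤ M y) (x : E) :
    μ / K * (1 / 2 * ‖x - xstar‖ ^ 2) ≤ M x - M xstar := by
  have hgrowth y : μ / K * (1 / 2 * ‖y - xs‖ ^ 2) ≤ M y - F xs :=
    calc μ / K * (1 / 2 * ‖y - xs‖ ^ 2) = μ / 2 * ‖y - xs‖ ^ 2 / K := by ring
      _ ≤ (F y - F xs) / K := by gcongr; exact hF y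
      _ ≤ M y - F xs := by linarith [hMF y]
  have hxstar : xstar = xs := by
    have hle : μ / K * (1 / 2 * ‖xstar - xs‖ ^ 2) ≤ 0 := by linarith [hgrowth xstar, hstar xs]
    have hpos : 0 < μ / K := div_pos hμ hK
    have : ‖xstar - xs‖ ^ 2 ≤ 0 := by nlinarith
    simpa [sub_eq_zero] using this
  subst hxstar
  linarith [hgrowth x, hstar x]

section Moreau

variable {d : ℕ} {γ : ℝ}

theorem moreau_le_self (hγ : 0 ≤ γ) {f : EuclideanSpace ℝ (Fin d) → ℝ} (hf : BddBelow (range f))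
    (x : EuclideanSpace ℝ (Fin d)) : moreau γ f x ≤ f x := by
  obtain ⟨m, hm⟩ := hf
  have hbdd : BddBelow (range fun z => f z + 1 / (2 * γ) * ‖z - x‖ ^ 2) := by
    refine ⟨m, ?_⟩
    rintro _ ⟨z, rfl⟩
    have : 0 ≤ 1 / (2 * γ) * ‖z - x‖ ^ 2 := by positivity
    linarith [hm ⟨z, rfl⟩]
  calc moreau γ f x ≤ f x + 1 / (2 * γ) * ‖x - x‖ ^ 2 := ciInf_le hbdd x
    _ = f x := by simp

theorem add_div_le_moreau {L : ℝ} (hγ : 0 < γ) (hL : 0 < L) {f : EuclideanSpace ℝ (Fin d) → ℝ}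
    {g : EuclideanSpace ℝ (Fin d) → EuclideanSpace ℝ (Fin d)}
    (hg : ∀ z, HasGradientAt f (g z) z) (hlip : ∀ z w, ‖g z - g w‖ ≤ L * ‖z - w‖)
    {xs : EuclideanSpace ℝ (Fin d)} (hmin : IsMinOn f univ xs) (x : EuclideanSpace ℝ (Fin d)) :
    f xs + (f x - f xs) / (1 + γ * L) ≤ moreau γ f x :=
  le_ciInf fun z => by
    have hdiv : (f x - f xs) / (1 + γ * L) ≤ f z + 1 / (2 * γ) * ‖z - x‖ ^ 2 - f xs := by
      rw [div_le_iff₀ (by positivity), mul_comm]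
      exact sub_le_one_add_mul_objective_sub hγ hL hg hlip hmin x z
    linarith

theorem add_div_le_avg_moreau {n : ℕ} {L : ℝ} (hγ : 0 < γ) (hL : 0 < L)
    {f : Fin n → EuclideanSpace ℝ (Fin d) → ℝ}
    {g : Fin n → EuclideanSpace ℝ (Fin d) → EuclideanSpace ℝ (Fin d)}
    (hg : ∀ i z, HasGradientAt (f i) (g i z) z) (hlip : ∀ i z w, ‖g i z - g i w‖ ≤ L * ‖z - w‖)
    {xs : EuclideanSpace ℝ (Fin d)} (hmin : ∀ i, IsMinOn (f i) univ xs)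
    (x : EuclideanSpace ℝ (Fin d)) :
    (1 / (n : ℝ)) * ∑ i, f i xs +
        ((1 / (n : ℝ)) * ∑ i, f i x - (1 / (n : ℝ)) * ∑ i, f i xs) / (1 + γ * L) ≤
      (1 / (n : ℝ)) * ∑ i, moreau γ (f i) x := by
  have h := Finset.sum_le_sum fun i (_ : i ∈ Finset.univ) =>
    add_div_le_moreau hγ hL (hg i) (hlip i) (hmin i) x
  rw [Finset.sum_add_distrib, ← Finset.sum_div, Finset.sum_sub_distrib] at h
  linear_combination mul_le_mul_of_nonneg_left h (by positivity : (0 : ℝ) ≤ 1 / (n : ℝ))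

end Moreau

theorem stmt12_general {d n : ℕ} (γ μ : ℝ) (hγ : 0 < γ) (hμ : 0 < μ)
    (f : Fin n → EuclideanSpace ℝ (Fin d) → ℝ)
    (g : Fin n → EuclideanSpace ℝ (Fin d) → EuclideanSpace ℝ (Fin d))
    (L : Fin n → ℝ) (Lmax : ℝ) (hL : ∀ i, 0 < L i)
    (hLmax : ∀ i, L i ≤ Lmax) (hLmax' : ∃ i, L i = Lmax)
    (hconv : ∀ i, ConvexOn ℝ Set.univ (f i))
    (hgrad : ∀ i x, HasGradientAt (f i) (g i x) x)
    (hlip : ∀ i x y, ‖g i x - g i y‖ ≤ L i * ‖x - y‖)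
    (hstrong : ∀ x y : EuclideanSpace ℝ (Fin d),
      (1 / (n : ℝ)) * ∑ i, f i x - (1 / (n : ℝ)) * ∑ i, f i y -
        (inner ℝ ((1 / (n : ℝ)) • ∑ i, g i y) (x - y) : ℝ) ≥ (μ / 2) * ‖x - y‖ ^ 2)
    (hint : ∃ xs : EuclideanSpace ℝ (Fin d), ∀ i, g i xs = 0) :
    ∀ (x xstar : EuclideanSpace ℝ (Fin d)),
      (∀ y, (1 / (n : ℝ)) * ∑ i, moreau γ (f i) xstar ≤
            (1 / (n : ℝ)) * ∑ i, moreau γ (f i) y) →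
      (1 / (n : ℝ)) * ∑ i, moreau γ (f i) x - (1 / (n : ℝ)) * ∑ i, moreau γ (f i) xstar ≥
        (μ / (1 + γ * Lmax)) * ((1 / 2) * ‖x - xstar‖ ^ 2) := by
  intro x xstar hstar
  obtain ⟨xs, hxs⟩ := hint
  obtain ⟨i₀, hi₀⟩ := hLmax'
  have hLmax_pos : 0 < Lmax := hi₀ ▸ hL i₀
  have hmin i : IsMinOn (f i) univ xs :=
    (hconv i).isMinOn_of_hasGradientAt_zero (hxs i ▸ hgrad i xs)
  have hlip_max i x y : ‖g i x - g i y‖ ≤ Lmax * ‖x - y‖ :=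
    (hlip i x y).trans (mul_le_mul_of_nonneg_right (hLmax i) (norm_nonneg _))
  refine quadratic_growth_of_forall_add_div_le
    (M := fun y => (1 / (n : ℝ)) * ∑ i, moreau γ (f i) y) (F := fun y => (1 / (n : ℝ)) * ∑ i, f i y)
    (by positivity) hμ (fun y => ?_)
    (add_div_le_avg_moreau hγ hLmax_pos hgrad hlip_max hmin) ?_ hstar x
  · simpa [hxs] using hstrong y xs
  · refine mul_le_mul_of_nonneg_left (Finset.sum_le_sum fun i _ => ?_) (by positivity)
    exact moreau_le_self hγ.le (by simpa using (hmin i).bddBelow) xs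

/-- Suppose each `fᵢ` is differentiable, convex, `Lᵢ`-smooth (`L_max = max_i Lᵢ`), the
interpolation regime holds, and `f = (1/n)∑ᵢ fᵢ` is `μ`-strongly convex. Then the averaged
Moreau envelope `M^γ = (1/n)∑ᵢ M_{fᵢ}^γ` satisfies
`M^γ(x) − M^γ(x⋆) ≥ (μ/(1+γL_max)) · (1/2)‖x − x⋆‖²` for any `x` and any minimizer `x⋆`
of `M^γ`. -/
theorem stmt12 {d n : ℕ} (hn : 0 < n) (γ μ : ℝ) (hγ : 0 < γ) (hμ : 0 < μ)
    (f : Fin n → EuclideanSpace ℝ (Fin d) → ℝ)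
    (g : Fin n → EuclideanSpace ℝ (Fin d) → EuclideanSpace ℝ (Fin d))
    (L : Fin n → ℝ) (Lmax : ℝ) (hL : ∀ i, 0 < L i)
    (hLmax : ∀ i, L i ≤ Lmax) (hLmax' : ∃ i, L i = Lmax)
    (hconv : ∀ i, ConvexOn ℝ Set.univ (f i))
    (hgrad : ∀ i x, HasGradientAt (f i) (g i x) x)
    (hlip : ∀ i x y, ‖g i x - g i y‖ ≤ L i * ‖x - y‖)
    (hstrong : ∀ x y : EuclideanSpace ℝ (Fin d),
      (1 / (n : ℝ)) * ∑ i, f i x - (1 / (n : ℝ)) * ∑ i, f i y -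
        (inner ℝ ((1 / (n : ℝ)) • ∑ i, g i y) (x - y) : ℝ) ≥ (μ / 2) * ‖x - y‖ ^ 2)
    (hint : ∃ xs : EuclideanSpace ℝ (Fin d), ∀ i, g i xs = 0) :
    ∀ (x xstar : EuclideanSpace ℝ (Fin d)),
      (∀ y, (1 / (n : ℝ)) * ∑ i, moreau γ (f i) xstar ≤
            (1 / (n : ℝ)) * ∑ i, moreau γ (f i) y) →
      (1 / (n : ℝ)) * ∑ i, moreau γ (f i) x - (1 / (n : ℝ)) * ∑ i, moreau γ (f i) xstar ≥
        (μ / (1 + γ * Lmax)) * ((1 / 2) * ‖x - xstar‖ ^ 2) :=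
  stmt12_general γ μ hγ hμ f g L Lmax hL hLmax hLmax' hconv hgrad hlip hstrong hint
end

section
/- Let f: ℝ^d → ℝ be differentiable, convex and L-smooth, γ > 0, and x ∈ ℝ^d. Then ‖x − prox_{γf}(x)‖² ≥ (γ/(1 + γL/2)) (f(x) − f(prox_{γf}(x))). Equivalently, ‖x − prox_{γf}(x)‖² ≥ (2γ/(2+γL))(f(x) − f(prox_{γf}(x))). -/
/-!
At the prox point `p` the optimality condition reads `x - p = γ ∇f(p)`, so
`⟪∇f(p), x - p⟫ = ‖x - p‖² / γ`. The descent lemma for an `L`-smooth function gives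
`f x ≤ f p + ⟪∇f(p), x - p⟫ + (L/2)‖x - p‖²`, hence `f x - f p ≤ (1/γ + L/2)‖x - p‖²`,
which rearranges to the claim.
-/

open InnerProductSpace Set
open scoped RealInnerProductSpace

variable {E : Type*} [NormedAddCommGroup E] [InnerProductSpace ℝ E] [CompleteSpace E]

theorem HasGradientAt.hasDerivAt_comp_add_smul {f : E → ℝ} {g p w : E} {t : ℝ}
    (hf : HasGradientAt f g (p + t • w)) :
    HasDerivAt (fun s : ℝ => f (p + s • w)) ⟪g, w⟫ t := by
  have hline : HasDerivAt (fun s : ℝ => p + s • w) w t := by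
    simpa using ((hasDerivAt_id t).smul_const w).const_add p
  exact (hf.hasFDerivAt.comp_hasDerivAt t hline).congr_deriv (by simp [toDual_apply_apply])

theorem le_add_inner_add_of_lipschitz_gradient {f : E → ℝ} {g : E → E} {L : ℝ} {p : E}
    (hgrad : ∀ z, HasGradientAt f (g z) z) (hlip : ∀ z, ‖g z - g p‖ ≤ L * ‖z - p‖) (x : E) :
    f x ≤ f p + ⟪g p, x - p⟫ + L / 2 * ‖x - p‖ ^ 2 := by
  set w := x - p
  -- `φ` is antitone on `[0, ∞)`; comparing `φ 1` with `φ 0` is the claim.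
  let φ : ℝ → ℝ := fun t => f (p + t • w) - t * ⟪g p, w⟫ - L / 2 * ‖w‖ ^ 2 * t ^ 2
  have hφ : ∀ t, HasDerivAt φ (⟪g (p + t • w) - g p, w⟫ - L * ‖w‖ ^ 2 * t) t := by
    intro t
    have h := (((hgrad (p + t • w)).hasDerivAt_comp_add_smul).sub
      ((hasDerivAt_id t).mul_const ⟪g p, w⟫)).sub ((hasDerivAt_pow 2 t).const_mul
        (L / 2 * ‖w‖ ^ 2))
    exact h.congr_deriv (by simp [inner_sub_left]; ring)
  have hφ_nonpos : ∀ t ∈ interior (Ici (0 : ℝ)),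
      ⟪g (p + t • w) - g p, w⟫ - L * ‖w‖ ^ 2 * t ≤ 0 := by
    intro t ht
    rw [interior_Ici, mem_Ioi] at ht
    have hstep : ‖g (p + t • w) - g p‖ ≤ L * (t * ‖w‖) := by
      simpa [norm_smul, abs_of_pos ht] using hlip (p + t • w)
    refine sub_nonpos.mpr ?_
    calc ⟪g (p + t • w) - g p, w⟫ ≤ ‖g (p + t • w) - g p‖ * ‖w‖ := real_inner_le_norm _ _
      _ ≤ L * (t * ‖w‖) * ‖w‖ := by gcongr
      _ = L * ‖w‖ ^ 2 * t := by ring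
  have hanti : AntitoneOn φ (Ici 0) :=
    antitoneOn_of_hasDerivWithinAt_nonpos (convex_Ici 0)
      (fun t _ => (hφ t).continuousAt.continuousWithinAt)
      (fun t _ => (hφ t).hasDerivWithinAt) hφ_nonpos
  have h := hanti (mem_Ici.mpr le_rfl) (mem_Ici.mpr zero_le_one) zero_le_one
  simp [φ, w] at h
  linarith

/-- `p = prox_{γf}(x)`. -/
def IsProxPoint (f : E → ℝ) (γ : ℝ) (x p : E) : Prop :=
  ∀ z, f p + 1 / (2 * γ) * ‖p - x‖ ^ 2 ≤ f z + 1 / (2 * γ) * ‖z - x‖ ^ 2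

theorem IsProxPoint.sub_eq_smul_gradient {f : E → ℝ} {γ : ℝ} {x p g : E}
    (hp : IsProxPoint f γ x p) (hγ : γ ≠ 0) (hf : HasGradientAt f g p) :
    x - p = γ • g := by
  have hF := hf.hasFDerivAt.add ((((hasFDerivAt_id p).sub_const x).norm_sq).const_mul
    (1 / (2 * γ)))
  have hzero := IsLocalMin.hasFDerivAt_eq_zero (Filter.Eventually.of_forall (fun z => hp z)) hF
  have hg : g = γ⁻¹ • (x - p) := by
    refine ext_inner_right ℝ fun v => ?_
    have hv := congrArg (fun T => T v) hzero
    simp [toDual_apply_apply, inner_smul_left, inner_sub_left] at hv ⊢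
    field_simp at hv ⊢
    linarith
  rw [hg, smul_smul, mul_inv_cancel₀ hγ, one_smul]

theorem IsProxPoint.sub_le_mul_norm_sq {f : E → ℝ} {g : E → E} {L γ : ℝ} {x p : E}
    (hp : IsProxPoint f γ x p) (hγ : γ ≠ 0) (hgrad : ∀ z, HasGradientAt f (g z) z)
    (hlip : ∀ z, ‖g z - g p‖ ≤ L * ‖z - p‖) :
    f x - f p ≤ (1 / γ + L / 2) * ‖x - p‖ ^ 2 := by
  have hinner : ⟪g p, x - p⟫ = 1 / γ * ‖x - p‖ ^ 2 := by
    rw [hp.sub_eq_smul_gradient hγ (hgrad p), inner_smul_right, norm_smul,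
      real_inner_self_eq_norm_sq, Real.norm_eq_abs, mul_pow, sq_abs]
    field_simp
  linarith [le_add_inner_add_of_lipschitz_gradient hgrad hlip x]

theorem stmt14_general {d : ℕ} (L γ : ℝ) (hL : 0 < L) (hγ : 0 < γ)
    (f : EuclideanSpace ℝ (Fin d) → ℝ)
    (g : EuclideanSpace ℝ (Fin d) → EuclideanSpace ℝ (Fin d))
    (hgrad : ∀ x, HasGradientAt f (g x) x)
    (hlip : ∀ x y, ‖g x - g y‖ ≤ L * ‖x - y‖) :
    ∀ (x p : EuclideanSpace ℝ (Fin d)),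
      (∀ z, f p + (1 / (2 * γ)) * ‖p - x‖ ^ 2 ≤ f z + (1 / (2 * γ)) * ‖z - x‖ ^ 2) →
      ‖x - p‖ ^ 2 ≥ (γ / (1 + γ * L / 2)) * (f x - f p) ∧
      ‖x - p‖ ^ 2 ≥ (2 * γ / (2 + γ * L)) * (f x - f p) := by
  intro x p hp
  have hbound : f x - f p ≤ (1 / γ + L / 2) * ‖x - p‖ ^ 2 :=
    IsProxPoint.sub_le_mul_norm_sq hp hγ.ne' hgrad (hlip · p)
  have hfirst : (γ / (1 + γ * L / 2)) * (f x - f p) ≤ ‖x - p‖ ^ 2 := by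
    rw [div_mul_eq_mul_div, div_le_iff₀ (by positivity)]
    have h := mul_le_mul_of_nonneg_left hbound hγ.le
    rw [show γ * ((1 / γ + L / 2) * ‖x - p‖ ^ 2) = ‖x - p‖ ^ 2 * (1 + γ * L / 2) by
      field_simp] at h
    exact h
  have hcoeff : 2 * γ / (2 + γ * L) = γ / (1 + γ * L / 2) := by
    field_simp
  exact ⟨hfirst, hcoeff ▸ hfirst⟩

/-- Let `f : ℝ^d → ℝ` be differentiable, convex and `L`-smooth, `γ > 0`, and `x ∈ ℝ^d`.
Then for `p = prox_{γf}(x)` (the minimizer of `z ↦ f(z) + (1/(2γ))‖z − x‖²`):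
`‖x − p‖² ≥ (γ/(1 + γL/2)) (f(x) − f(p))`, equivalently
`‖x − p‖² ≥ (2γ/(2+γL)) (f(x) − f(p))`. -/
theorem stmt14 {d : ℕ} (L γ : ℝ) (hL : 0 < L) (hγ : 0 < γ)
    (f : EuclideanSpace ℝ (Fin d) → ℝ)
    (g : EuclideanSpace ℝ (Fin d) → EuclideanSpace ℝ (Fin d))
    (hconv : ConvexOn ℝ Set.univ f)
    (hgrad : ∀ x, HasGradientAt f (g x) x)
    (hlip : ∀ x y, ‖g x - g y‖ ≤ L * ‖x - y‖) :
    ∀ (x p : EuclideanSpace ℝ (Fin d)),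
      (∀ z, f p + (1 / (2 * γ)) * ‖p - x‖ ^ 2 ≤ f z + (1 / (2 * γ)) * ‖z - x‖ ^ 2) →
      ‖x - p‖ ^ 2 ≥ (γ / (1 + γ * L / 2)) * (f x - f p) ∧
      ‖x - p‖ ^ 2 ≥ (2 * γ / (2 + γ * L)) * (f x - f p) :=
  stmt14_general L γ hL hγ f g hgrad hlip
end
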